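/- arXiv:2309.14194 — 6 statements merged into one kernel-verified Lean document; each statement's English description precedes it below -/
import Mathlib

section
/- Let n ≥ 1 and let k ≠ l be integers with 0 ≤ k, l ≤ n. Let α, β ∈ (0,1) be reals with α + β = 1 such that m := kα + lβ is an integer belonging to {0, …, n}. Then for every λ ∈ Γ_k ∩ Γ_l one has P_m(λ) ≥ P_k(λ)^α · P_l(λ)^β, and equality holds if and only if λ₁ = λ₂ = ⋯ = λ_n. -/
/-!
Newton's inequalities `P_i P_{i+2} ≤ P_{i+1}²` hold for every `λ ∈ ℝⁿ`, and equality together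
with `P_{i+2} ≠ 0` forces all `λ_r` to be equal. They go by induction on `n`: by Rolle the
derivative of `∏ (X - λ_r)` has `n - 1` real roots, and these have the same normalized elementary
symmetric means `P_0, …, P_{n-1}` as `λ`. This lowers `n` down to `i + 2 = n`, where `λ ↦ λ⁻¹`
turns the inequality into `P_2 ≤ P_1²`, i.e. `∑_{a,b} (λ_a - λ_b)² ≥ 0`.

On `Γ_l` the means `P_0, …, P_l` are positive, so Newton's inequalities say that `j ↦ log P_j` is
concave on `{0, …, l}`. Comparing slopes of a concave sequence on both sides of `m` gives
`log P_m ≥ α log P_k + β log P_l`, and equality forces `P_{m-1} P_{m+1} = P_m²`.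
-/

/-- The normalized `k`-th elementary symmetric function
`P_k(λ) = binom(n,k)⁻¹ · Σ_{1 ≤ i₁ < ⋯ < i_k ≤ n} λ_{i₁} ⋯ λ_{i_k}`. -/
noncomputable def normESymm (n k : ℕ) (lam : Fin n → ℝ) : ℝ :=
  ((n.choose k : ℝ))⁻¹ * ∑ s ∈ Finset.univ.powersetCard k, ∏ i ∈ s, lam i

/-- The Gårding cone `Γ_k = {λ ∈ ℝⁿ : P_i(λ) > 0, i = 1, …, k}`. -/
def gardingCone (n k : ℕ) : Set (Fin n → ℝ) :=
  {lam | ∀ i : ℕ, 1 ≤ i → i ≤ k → 0 < normESymm n i lam}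

open Finset

section Basic

variable {n : ℕ}

lemma normESymm_zero (x : Fin n → ℝ) : normESymm n 0 x = 1 := by
  simp [normESymm]

lemma normESymm_eq_zero_of_lt {k : ℕ} (h : n < k) (x : Fin n → ℝ) : normESymm n k x = 0 := by
  simp [normESymm, Nat.choose_eq_zero_of_lt h]

lemma normESymm_self (x : Fin n → ℝ) : normESymm n n x = ∏ i, x i := by
  have h : (univ : Finset (Fin n)).powersetCard n = {univ} := by
    simpa using powersetCard_self (univ : Finset (Fin n))
  simp [normESymm, h]

lemma normESymm_const {k : ℕ} (hk : k ≤ n) (c : ℝ) : normESymm n k (fun _ ↦ c) = c ^ k := by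
  have hc : (n.choose k : ℝ) ≠ 0 := by exact_mod_cast (Nat.choose_pos hk).ne'
  rw [normESymm, sum_congr rfl fun s hs ↦ by rw [prod_const, (mem_powersetCard_univ.mp hs)],
    sum_const, card_powersetCard, card_univ, Fintype.card_fin, nsmul_eq_mul,
    inv_mul_cancel_left₀ hc]

lemma normESymm_eq_esymm (k : ℕ) (x : Fin n → ℝ) :
    normESymm n k x = (n.choose k : ℝ)⁻¹ * (univ.val.map x).esymm k := by
  rw [normESymm, esymm_map_val]

lemma normESymm_one (x : Fin n → ℝ) : normESymm n 1 x = (∑ i, x i) / n := by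
  simp [normESymm, powersetCard_one, div_eq_inv_mul]

end Basic

lemma two_mul_sum_powersetCard_two {ι : Type*} [DecidableEq ι] (s : Finset ι) (f : ι → ℝ) :
    2 * ∑ t ∈ s.powersetCard 2, ∏ i ∈ t, f i = (∑ i ∈ s, f i) ^ 2 - ∑ i ∈ s, f i ^ 2 := by
  induction s using Finset.induction_on with
  | empty => simp [powersetCard_eq_empty.mpr (show (∅ : Finset ι).card < 2 by simp)]
  | @insert a s ha ih =>
    rw [powersetCard_succ_insert ha, sum_union, sum_image, sum_insert ha, sum_insert ha]
    · have hins : ∀ t ∈ s.powersetCard 1, ∏ i ∈ insert a t, f i = f a * ∏ i ∈ t, f i :=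
        fun t ht ↦ prod_insert fun hat ↦ ha ((mem_powersetCard.mp ht).1 hat)
      rw [sum_congr rfl hins, ← mul_sum, powersetCard_one, sum_map]
      simp only [Function.Embedding.coeFn_mk, prod_singleton]
      linear_combination ih
    · intro t ht u hu htu
      have hat : a ∉ t := fun h ↦ ha ((mem_powersetCard.mp ht).1 h)
      have hau : a ∉ u := fun h ↦ ha ((mem_powersetCard.mp hu).1 h)
      rw [← erase_insert hat, ← erase_insert hau, htu]
    · refine disjoint_left.mpr fun t ht htu ↦ ?_
      obtain ⟨u, _, rfl⟩ := mem_image.mp htu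
      exact ha ((mem_powersetCard.mp ht).1 (mem_insert_self a u))

lemma sum_sum_sub_sq {ι : Type*} [Fintype ι] (x : ι → ℝ) :
    ∑ a, ∑ b, (x a - x b) ^ 2 = 2 * (Fintype.card ι * ∑ a, x a ^ 2 - (∑ a, x a) ^ 2) := by
  simp only [sub_sq, sum_add_distrib, sum_sub_distrib, sum_const, card_univ, nsmul_eq_mul,
    ← mul_sum, ← sum_mul, mul_assoc]
  ring

lemma sq_normESymm_one_sub_normESymm_two {n : ℕ} (hn : 2 ≤ n) (x : Fin n → ℝ) :
    normESymm n 1 x ^ 2 - normESymm n 2 x =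
      (∑ a, ∑ b, (x a - x b) ^ 2) / (2 * n ^ 2 * (n - 1)) := by
  have hn1 : (n : ℝ) - 1 ≠ 0 := by
    have : (2 : ℝ) ≤ n := by exact_mod_cast hn
    linarith
  rw [normESymm_one, normESymm, Nat.cast_choose_two, sum_sum_sub_sq, Fintype.card_fin]
  have h2 := two_mul_sum_powersetCard_two (univ : Finset (Fin n)) x
  field_simp
  linear_combination -(n : ℝ) * h2

lemma normESymm_two_le_sq_normESymm_one {n : ℕ} (x : Fin n → ℝ) :
    normESymm n 2 x ≤ normESymm n 1 x ^ 2 := by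
  rcases lt_or_ge n 2 with hn | hn
  · rw [normESymm_eq_zero_of_lt hn]
    positivity
  · have : (0 : ℝ) ≤ n - 1 := by
      have : (2 : ℝ) ≤ n := by exact_mod_cast hn
      linarith
    rw [← sub_nonneg, sq_normESymm_one_sub_normESymm_two hn x]
    positivity

lemma eq_of_normESymm_two_eq_sq_normESymm_one {n : ℕ} {x : Fin n → ℝ}
    (h : normESymm n 2 x = normESymm n 1 x ^ 2) (a b : Fin n) : x a = x b := by
  rcases lt_or_ge n 2 with hn | hn
  · have : Subsingleton (Fin n) := Fin.subsingleton_iff_le_one.mpr (by omega)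
    rw [Subsingleton.elim a b]
  · have hden : (2 * n ^ 2 * (n - 1) : ℝ) ≠ 0 := by
      have : (2 : ℝ) ≤ n := by exact_mod_cast hn
      have : (n : ℝ) - 1 ≠ 0 := by linarith
      positivity
    have hsum : ∑ a, ∑ b, (x a - x b) ^ 2 = 0 := by
      have := sq_normESymm_one_sub_normESymm_two hn x
      rw [h, sub_self, eq_comm, div_eq_zero_iff] at this
      exact this.resolve_right hden
    have hab := (sum_eq_zero_iff_of_nonneg fun _ _ ↦ sq_nonneg _).mp
      ((sum_eq_zero_iff_of_nonneg fun _ _ ↦ sum_nonneg fun _ _ ↦ sq_nonneg _).mp hsum a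
        (mem_univ a)) b (mem_univ b)
    exact sub_eq_zero.mp (pow_eq_zero_iff two_ne_zero |>.mp hab)

lemma normESymm_eq_normESymm_self_mul_normESymm_inv {n j k : ℕ} {x : Fin n → ℝ}
    (hx : ∀ i, x i ≠ 0) (hjk : j + k = n) :
    normESymm n k x = normESymm n n x * normESymm n j x⁻¹ := by
  have hcompl : ∑ s ∈ univ.powersetCard k, ∏ i ∈ s, x i =
      ∑ t ∈ univ.powersetCard j, ∏ i ∈ tᶜ, x i := by
    refine sum_nbij' (fun s ↦ sᶜ) (fun t ↦ tᶜ) ?_ ?_ (fun s _ ↦ compl_compl s)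
      (fun t _ ↦ compl_compl t) (fun s _ ↦ by rw [compl_compl])
    all_goals
      intro s hs
      simp only [mem_powersetCard_univ, card_compl, Fintype.card_fin] at hs ⊢
      omega
  have hprod : ∀ t : Finset (Fin n), ∏ i ∈ tᶜ, x i = (∏ i, x i) * ∏ i ∈ t, x⁻¹ i := by
    intro t
    rw [← prod_compl_mul_prod t x, Pi.inv_def, prod_inv_distrib, mul_inv_cancel_right₀]
    exact prod_ne_zero_iff.mpr fun i _ ↦ hx i
  rw [normESymm, hcompl, sum_congr rfl fun t _ ↦ hprod t, ← mul_sum, normESymm_self, normESymm,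
    Nat.choose_symm_of_eq_add hjk.symm]
  ring

lemma sq_normESymm_sub_mul_normESymm_of_add_two_eq {n i : ℕ} {x : Fin n → ℝ}
    (hx : ∀ i, x i ≠ 0) (hi : i + 2 = n) :
    normESymm n (i + 1) x ^ 2 - normESymm n i x * normESymm n (i + 2) x =
      normESymm n n x ^ 2 * (normESymm n 1 x⁻¹ ^ 2 - normESymm n 2 x⁻¹) := by
  rw [normESymm_eq_normESymm_self_mul_normESymm_inv hx (j := 1) (by omega),
    normESymm_eq_normESymm_self_mul_normESymm_inv hx (j := 2) (k := i) (by omega),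
    normESymm_eq_normESymm_self_mul_normESymm_inv hx (j := 0) (k := i + 2) (by omega),
    normESymm_zero]
  ring

namespace Polynomial

theorem Splits.derivative_of_real {p : ℝ[X]} (hp : p.Splits) : p.derivative.Splits := by
  have := card_roots_le_derivative p
  rw [← hp.natDegree_eq_card_roots] at this
  rw [splits_iff_card_roots, natDegree_derivative]
  exact le_antisymm ((card_roots' _).trans (natDegree_derivative p).le) (by omega)

theorem Splits.esymm_roots_derivative_of_real {p : ℝ[X]} (hp : p.Splits) {e : ℕ}
    (he : e < p.natDegree) :
    (p.natDegree : ℝ) * p.derivative.roots.esymm e = (p.natDegree - e) * p.roots.esymm e := by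
  have hp0 : p.leadingCoeff ≠ 0 := leadingCoeff_ne_zero.mpr (by rintro rfl; simp at he)
  have hcoeff := coeff_derivative p (p.natDegree - 1 - e)
  rw [coeff_eq_esymm_roots_of_splits hp.derivative_of_real (by simp),
    coeff_eq_esymm_roots_of_splits hp (by omega), leadingCoeff_derivative,
    natDegree_derivative, show p.natDegree - 1 - (p.natDegree - 1 - e) = e by omega,
    show p.natDegree - (p.natDegree - 1 - e + 1) = e by omega,
    Nat.cast_sub (by omega), Nat.cast_sub (by omega)] at hcoeff
  apply mul_left_cancel₀ (mul_ne_zero hp0 (pow_ne_zero e (neg_ne_zero.mpr one_ne_zero)))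
  push_cast at hcoeff
  linear_combination hcoeff

end Polynomial

lemma Multiset.exists_map_univ_val_eq {α : Type*} {n : ℕ} (t : Multiset α)
    (ht : Multiset.card t = n) : ∃ y : Fin n → α, univ.val.map y = t := by
  subst ht
  refine ⟨fun i ↦ t.toList.get (Fin.cast t.length_toList.symm i), ?_⟩
  rw [Fin.univ_val_map, ← List.ofFn_congr t.length_toList, List.ofFn_get, Multiset.coe_toList]

open Polynomial in
theorem exists_normESymm_eq_normESymm_succ {n : ℕ} (x : Fin (n + 1) → ℝ) :
    ∃ y : Fin n → ℝ, ∀ e ≤ n, normESymm n e y = normESymm (n + 1) e x := by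
  set M := univ.val.map x
  set p := (M.map fun a ↦ X - C a).prod
  have hsplit : p.Splits := Splits.multisetProd fun f hf ↦ by
    obtain ⟨a, _, rfl⟩ := Multiset.mem_map.mp hf
    exact Splits.X_sub_C a
  have hdeg : p.natDegree = n + 1 := by
    rw [natDegree_multiset_prod_X_sub_C_eq_card]
    simp [M]
  have hroots : p.roots = M := roots_multiset_prod_X_sub_C M
  obtain ⟨y, hy⟩ := Multiset.exists_map_univ_val_eq (n := n) p.derivative.roots
    (by rw [← hsplit.derivative_of_real.natDegree_eq_card_roots, natDegree_derivative, hdeg]; rfl)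
  refine ⟨y, fun e he ↦ ?_⟩
  have hesymm := hsplit.esymm_roots_derivative_of_real (e := e) (by omega)
  rw [hdeg, hroots, ← hy] at hesymm
  have hchoose : (n.choose e : ℝ) * (n + 1) = ((n + 1).choose e) * (n + 1 - e) := by
    have h := congrArg (Nat.cast (R := ℝ)) (Nat.choose_mul_succ_eq n e)
    push_cast [Nat.cast_sub (show e ≤ n + 1 by omega)] at h
    exact h
  have hne : (n + 1 - e : ℝ) ≠ 0 := by
    have : (e : ℝ) ≤ n := by exact_mod_cast he
    linarith
  have hc : (n.choose e : ℝ) ≠ 0 := by exact_mod_cast (Nat.choose_pos he).ne'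
  have hc' : ((n + 1).choose e : ℝ) ≠ 0 := by exact_mod_cast (Nat.choose_pos (by omega)).ne'
  push_cast at hesymm
  rw [normESymm_eq_esymm, normESymm_eq_esymm]
  field_simp
  apply mul_left_cancel₀ hne
  linear_combination (n.choose e : ℝ) * hesymm - (univ.val.map y).esymm e * hchoose

lemma normESymm_mul_le_sq_of_add_two_eq {n i : ℕ} (hi : i + 2 = n) (x : Fin n → ℝ) :
    normESymm n i x * normESymm n (i + 2) x ≤ normESymm n (i + 1) x ^ 2 := by
  by_cases hx : ∀ r, x r ≠ 0
  · have := sq_normESymm_sub_mul_normESymm_of_add_two_eq hx hi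
    have : 0 ≤ normESymm n 1 x⁻¹ ^ 2 - normESymm n 2 x⁻¹ :=
      sub_nonneg.mpr (normESymm_two_le_sq_normESymm_one _)
    nlinarith [sq_nonneg (normESymm n n x)]
  · push Not at hx
    obtain ⟨r, hr⟩ := hx
    rw [hi, normESymm_self, prod_eq_zero (mem_univ r) hr, mul_zero]
    positivity

lemma eq_of_normESymm_mul_eq_sq_of_add_two_eq {n i : ℕ} (hi : i + 2 = n) {x : Fin n → ℝ}
    (h : normESymm n i x * normESymm n (i + 2) x = normESymm n (i + 1) x ^ 2)
    (hne : normESymm n (i + 2) x ≠ 0) (a b : Fin n) : x a = x b := by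
  rw [hi, normESymm_self] at hne
  have hx : ∀ r, x r ≠ 0 := fun r ↦ (prod_ne_zero_iff.mp hne) r (mem_univ r)
  have hid := sq_normESymm_sub_mul_normESymm_of_add_two_eq hx hi
  rw [h, sub_self, eq_comm, mul_eq_zero, normESymm_self, sub_eq_zero] at hid
  exact inv_injective <|
    eq_of_normESymm_two_eq_sq_normESymm_one (hid.resolve_left (pow_ne_zero 2 hne)).symm a b

theorem normESymm_mul_le_sq (n i : ℕ) (x : Fin n → ℝ) :
    normESymm n i x * normESymm n (i + 2) x ≤ normESymm n (i + 1) x ^ 2 := by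
  induction n with
  | zero =>
    rw [normESymm_eq_zero_of_lt (k := i + 2) (by omega), mul_zero]
    positivity
  | succ n ih =>
    rcases lt_trichotomy (i + 2) (n + 1) with hi | hi | hi
    · obtain ⟨y, hy⟩ := exists_normESymm_eq_normESymm_succ x
      rw [← hy i (by omega), ← hy (i + 1) (by omega), ← hy (i + 2) (by omega)]
      exact ih y
    · exact normESymm_mul_le_sq_of_add_two_eq hi x
    · rw [normESymm_eq_zero_of_lt hi, mul_zero]
      positivity

theorem eq_of_normESymm_mul_eq_sq {n i : ℕ} {x : Fin n → ℝ}
    (h : normESymm n i x * normESymm n (i + 2) x = normESymm n (i + 1) x ^ 2)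
    (hne : normESymm n (i + 2) x ≠ 0) (a b : Fin n) : x a = x b := by
  induction n with
  | zero => exact a.elim0
  | succ n ih =>
    rcases lt_trichotomy (i + 2) (n + 1) with hi | hi | hi
    · obtain ⟨y, hy⟩ := exists_normESymm_eq_normESymm_succ x
      rw [← hy i (by omega), ← hy (i + 1) (by omega), ← hy (i + 2) (by omega)] at h
      rw [← hy (i + 2) (by omega)] at hne
      obtain ⟨c, rfl⟩ : ∃ c, y = fun _ ↦ c :=
        ⟨y ⟨0, by omega⟩, funext fun r ↦ ih h hne r ⟨0, by omega⟩⟩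
      refine eq_of_normESymm_two_eq_sq_normESymm_one ?_ a b
      rw [← hy 1 (by omega), ← hy 2 (by omega), normESymm_const (by omega),
        normESymm_const (by omega), pow_one]
    · exact eq_of_normESymm_mul_eq_sq_of_add_two_eq hi h hne a b
    · exact absurd (normESymm_eq_zero_of_lt hi x) hne

lemma sum_Ico_sum_Ico_sub (L : ℕ → ℝ) {a b c d : ℕ} (hab : a ≤ b) (hcd : c ≤ d) :
    ∑ _i ∈ Ico a b, ∑ j ∈ Ico c d, (L (j + 1) - L j) = (b - a : ℝ) * (L d - L c) := by
  rw [sum_Ico_sub L hcd, sum_const, Nat.card_Ico, nsmul_eq_mul, Nat.cast_sub hab]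

section MidpointConcave

variable {L : ℕ → ℝ} {l : ℕ} (hL : ∀ j, j + 2 ≤ l → L j + L (j + 2) ≤ 2 * L (j + 1))
include hL

lemma sub_le_sub_of_midpoint_concave {a b : ℕ} (hab : a ≤ b) (hb : b + 1 ≤ l) :
    L (b + 1) - L b ≤ L (a + 1) - L a := by
  induction b, hab using Nat.le_induction with
  | base => exact le_rfl
  | succ b hab ih =>
    have := hL b (by omega)
    linarith [ih (by omega)]

lemma mul_sub_le_mul_sub_of_midpoint_concave {k m : ℕ} (hkm : k ≤ m) (hml : m ≤ l) :
    ((m : ℝ) - k) * (L l - L m) ≤ (l - m) * (L m - L k) := by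
  rw [← sum_Ico_sum_Ico_sub L hkm hml, ← sum_Ico_sum_Ico_sub L hml hkm, sum_comm (s := Ico m l)]
  refine sum_le_sum fun i hi ↦ sum_le_sum fun j hj ↦ ?_
  rw [mem_Ico] at hi hj
  exact sub_le_sub_of_midpoint_concave hL (by omega) (by omega)

lemma midpoint_eq_of_mul_sub_eq {k j : ℕ} (hkj : k ≤ j) (hjl : j + 2 ≤ l)
    (h : (((j + 1 : ℕ) : ℝ) - k) * (L l - L (j + 1)) = (l - (j + 1 : ℕ)) * (L (j + 1) - L k)) :
    L j + L (j + 2) = 2 * L (j + 1) := by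
  have hslope : ∀ i ∈ Ico k (j + 1), ∀ i' ∈ Ico (j + 1) l, L (i' + 1) - L i' ≤ L (i + 1) - L i :=
    fun i hi i' hi' ↦ by
      rw [mem_Ico] at hi hi'
      exact sub_le_sub_of_midpoint_concave hL (by omega) (by omega)
  have hsum : ∑ _i ∈ Ico k (j + 1), ∑ i' ∈ Ico (j + 1) l, (L (i' + 1) - L i') =
      ∑ i ∈ Ico k (j + 1), ∑ _i' ∈ Ico (j + 1) l, (L (i + 1) - L i) := by
    rw [sum_Ico_sum_Ico_sub L (by omega) (by omega), sum_comm (s := Ico k (j + 1)),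
      sum_Ico_sum_Ico_sub L (by omega) (by omega), h]
  have hj := (sum_eq_sum_iff_of_le fun i hi ↦ sum_le_sum (hslope i hi)).mp hsum j
    (by simp; omega)
  have := (sum_eq_sum_iff_of_le (hslope j (by simp; omega))).mp hj (j + 1) (by simp; omega)
  linarith

end MidpointConcave

section LogConcave

open Real

variable {a : ℕ → ℝ} {l : ℕ}

lemma log_midpoint_concave_of_mul_le_sq (ha : ∀ j ≤ l, 0 < a j)
    (hsq : ∀ j, j + 2 ≤ l → a j * a (j + 2) ≤ a (j + 1) ^ 2) (j : ℕ) (hj : j + 2 ≤ l) :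
    log (a j) + log (a (j + 2)) ≤ 2 * log (a (j + 1)) := by
  have := log_le_log (mul_pos (ha j (by omega)) (ha (j + 2) hj)) (hsq j hj)
  rwa [log_mul (ha j (by omega)).ne' (ha (j + 2) hj).ne', log_pow, Nat.cast_ofNat] at this

lemma log_rpow_mul_rpow {x y : ℝ} (hx : 0 < x) (hy : 0 < y) (α β : ℝ) :
    log (x ^ α * y ^ β) = α * log x + β * log y := by
  rw [log_mul (rpow_pos_of_pos hx α).ne' (rpow_pos_of_pos hy β).ne', log_rpow hx, log_rpow hy]

lemma mul_sub_sub_mul_sub_eq_of_eq_mul_add_mul {k m : ℕ} {α β : ℝ} (hαβ : α + β = 1)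
    (hm : (m : ℝ) = k * α + l * β) (L : ℕ → ℝ) :
    ((m : ℝ) - k) * (L l - L m) - (l - m) * (L m - L k) =
      (l - k) * (α * L k + β * L l - L m) := by
  rw [show (m : ℝ) - k = (l - k) * β by linear_combination hm + k * hαβ,
    show (l : ℝ) - m = (l - k) * α by linear_combination -hm - l * hαβ]
  linear_combination -(l - k : ℝ) * L m * hαβ

variable {k m : ℕ} {α β : ℝ} (hkl : k < l) (hα : 0 < α) (hβ : 0 < β) (hαβ : α + β = 1)
  (hm : (m : ℝ) = k * α + l * β)
include hkl hα hβ hαβ hm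

lemma lt_and_lt_of_cast_eq_mul_add_mul : k < m ∧ m < l := by
  have : (k : ℝ) < l := by exact_mod_cast hkl
  have hkm : (k : ℝ) < m := by nlinarith
  have hml : (m : ℝ) < l := by nlinarith
  exact ⟨by exact_mod_cast hkm, by exact_mod_cast hml⟩

variable (ha : ∀ j ≤ l, 0 < a j) (hsq : ∀ j, j + 2 ≤ l → a j * a (j + 2) ≤ a (j + 1) ^ 2)
include ha hsq

theorem rpow_mul_rpow_le_of_mul_le_sq : a k ^ α * a l ^ β ≤ a m := by
  obtain ⟨hkm, hml⟩ := lt_and_lt_of_cast_eq_mul_add_mul hkl hα hβ hαβ hm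
  have hchord := mul_sub_le_mul_sub_of_midpoint_concave
    (log_midpoint_concave_of_mul_le_sq ha hsq) hkm.le hml.le
  have hlk : (0 : ℝ) < l - k := sub_pos.mpr (by exact_mod_cast hkl)
  have hid := mul_sub_sub_mul_sub_eq_of_eq_mul_add_mul hαβ hm (fun j ↦ log (a j))
  have hk := ha k hkl.le
  have hl := ha l le_rfl
  rw [← log_le_log_iff (by positivity) (ha m hml.le), log_rpow_mul_rpow hk hl]
  nlinarith

theorem exists_mul_eq_sq_of_eq_rpow_mul_rpow (heq : a m = a k ^ α * a l ^ β) :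
    ∃ j, j + 1 = m ∧ j + 2 ≤ l ∧ a j * a (j + 2) = a (j + 1) ^ 2 := by
  obtain ⟨hkm, hml⟩ := lt_and_lt_of_cast_eq_mul_add_mul hkl hα hβ hαβ hm
  have hlog := congrArg log heq
  rw [log_rpow_mul_rpow (ha k hkl.le) (ha l le_rfl)] at hlog
  have hchord := mul_sub_sub_mul_sub_eq_of_eq_mul_add_mul hαβ hm (fun j ↦ log (a j))
  rw [← hlog, sub_self, mul_zero, sub_eq_zero] at hchord
  obtain ⟨j, rfl⟩ : ∃ j, m = j + 1 := ⟨m - 1, by omega⟩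
  have hmid := midpoint_eq_of_mul_sub_eq (log_midpoint_concave_of_mul_le_sq ha hsq)
    (show k ≤ j by omega) hml hchord
  refine ⟨j, rfl, hml, ?_⟩
  have hj := ha j (by omega)
  have hj1 := ha (j + 1) (by omega)
  have hj2 := ha (j + 2) hml
  rw [← exp_log (mul_pos hj hj2), ← exp_log (pow_pos hj1 2), log_mul hj.ne' hj2.ne', log_pow,
    hmid, Nat.cast_ofNat]

end LogConcave

lemma normESymm_pos_of_mem_gardingCone {n l j : ℕ} {x : Fin n → ℝ} (hx : x ∈ gardingCone n l)
    (hj : j ≤ l) : 0 < normESymm n j x := by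
  rcases Nat.eq_zero_or_pos j with rfl | hj0
  · simp [normESymm_zero]
  · exact hx j hj0 hj

theorem normESymm_interpolation_of_lt {n k l m : ℕ} (hl : l ≤ n) (hkl : k < l) {α β : ℝ}
    (hα : 0 < α) (hβ : 0 < β) (hαβ : α + β = 1) (hm : (m : ℝ) = k * α + l * β)
    {x : Fin n → ℝ} (hx : x ∈ gardingCone n l) :
    normESymm n k x ^ α * normESymm n l x ^ β ≤ normESymm n m x ∧
      (normESymm n m x = normESymm n k x ^ α * normESymm n l x ^ β ↔ ∀ i j, x i = x j) := by
  have hpos : ∀ j ≤ l, 0 < normESymm n j x := fun j hj ↦ normESymm_pos_of_mem_gardingCone hx hj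
  have hnewton : ∀ j, j + 2 ≤ l → normESymm n j x * normESymm n (j + 2) x ≤
      normESymm n (j + 1) x ^ 2 := fun j _ ↦ normESymm_mul_le_sq n j x
  refine ⟨rpow_mul_rpow_le_of_mul_le_sq hkl hα hβ hαβ hm hpos hnewton,
    fun heq ↦ ?_, fun hconst ↦ ?_⟩
  · obtain ⟨j, -, hjl, hj⟩ := exists_mul_eq_sq_of_eq_rpow_mul_rpow hkl hα hβ hαβ hm hpos hnewton heq
    exact eq_of_normESymm_mul_eq_sq hj (hpos (j + 2) hjl).ne'
  · obtain ⟨-, hml⟩ := lt_and_lt_of_cast_eq_mul_add_mul hkl hα hβ hαβ hm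
    obtain ⟨c, rfl⟩ : ∃ c, x = fun _ ↦ c := ⟨x ⟨0, by omega⟩, funext fun i ↦ hconst i _⟩
    have hc : 0 < c := by simpa [normESymm_const (show 1 ≤ n by omega)] using hpos 1 (by omega)
    rw [normESymm_const (by omega), normESymm_const (by omega), normESymm_const hl,
      ← Real.rpow_natCast, ← Real.rpow_natCast, ← Real.rpow_natCast, ← Real.rpow_mul hc.le,
      ← Real.rpow_mul hc.le, ← Real.rpow_add hc, hm]

theorem normESymm_interpolation_general (n k l : ℕ) (hk : k ≤ n) (hl : l ≤ n)
    (hkl : k ≠ l) (α β : ℝ) (hα0 : 0 < α) (hβ0 : 0 < β)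
    (hαβ : α + β = 1) (m : ℕ) (hm : (m : ℝ) = (k : ℝ) * α + (l : ℝ) * β)
    (lam : Fin n → ℝ) (hlamk : lam ∈ gardingCone n k) (hlaml : lam ∈ gardingCone n l) :
    normESymm n m lam ≥ normESymm n k lam ^ α * normESymm n l lam ^ β ∧
    (normESymm n m lam = normESymm n k lam ^ α * normESymm n l lam ^ β ↔
      ∀ i j : Fin n, lam i = lam j) := by
  rcases hkl.lt_or_gt with hlt | hgt
  · exact normESymm_interpolation_of_lt hl hlt hα0 hβ0 hαβ hm hlaml
  · rw [mul_comm]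
    exact normESymm_interpolation_of_lt hk hgt hβ0 hα0 (by linarith) (by linarith) hlamk

/-- For `λ ∈ Γ_k ∩ Γ_l` and `m = kα + lβ` with `α + β = 1`, `α, β ∈ (0,1)`,
one has `P_m(λ) ≥ P_k(λ)^α · P_l(λ)^β`, with equality iff all `λ_i` are equal. -/
theorem normESymm_interpolation (n k l : ℕ) (hn : 1 ≤ n) (hk : k ≤ n) (hl : l ≤ n)
    (hkl : k ≠ l) (α β : ℝ) (hα0 : 0 < α) (hα1 : α < 1) (hβ0 : 0 < β) (hβ1 : β < 1)
    (hαβ : α + β = 1) (m : ℕ) (hm : (m : ℝ) = (k : ℝ) * α + (l : ℝ) * β) (hmn : m ≤ n)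
    (lam : Fin n → ℝ) (hlamk : lam ∈ gardingCone n k) (hlaml : lam ∈ gardingCone n l) :
    normESymm n m lam ≥ normESymm n k lam ^ α * normESymm n l lam ^ β ∧
    (normESymm n m lam = normESymm n k lam ^ α * normESymm n l lam ^ β ↔
      ∀ i j : Fin n, lam i = lam j) :=
  normESymm_interpolation_general n k l hk hl hkl α β hα0 hβ0 hαβ m hm lam hlamk hlaml
end

section
/- Let k ≥ 2 be an integer and let φ : (0,∞) → (0,∞) be a continuously differentiable function such that −k/s < (log φ)'(s) < 0 for every s > 0, i.e. −k·φ(s) < s·φ'(s) < 0. Then φ satisfies condition (1.11): for all reals t > s > 0, (s·φ(s)^{1/k} − t·φ(t)^{1/k}) · (φ(s)^{(k−1)/k} − φ(t)^{(k−1)/k}) < 0. -/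
/-!
Both factors have a fixed sign. Since `(s φ(s)^{1/k})' = φ(s)^{1/k - 1} (k φ(s) + s φ'(s)) / k`,
the lower bound `-k φ < s φ'` makes `s ↦ s φ(s)^{1/k}` strictly increasing, so the first factor
is negative; the upper bound `s φ' < 0` makes `φ`, hence `φ^{(k-1)/k}`, strictly decreasing,
so the second factor is positive.
-/

open Set

theorem strictAntiOn_Ioi_of_mul_deriv_neg {φ φ' : ℝ → ℝ}
    (hderiv : ∀ s : ℝ, 0 < s → HasDerivAt φ (φ' s) s)
    (hneg : ∀ s : ℝ, 0 < s → s * φ' s < 0) :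
    StrictAntiOn φ (Ioi 0) := by
  refine strictAntiOn_of_deriv_neg (convex_Ioi 0)
    (fun s hs => (hderiv s hs).continuousAt.continuousWithinAt) fun s hs => ?_
  rw [interior_Ioi] at hs
  rw [(hderiv s hs).deriv]
  exact neg_of_mul_neg_right (hneg s hs) hs.le

theorem strictMonoOn_mul_rpow_one_div {p : ℝ} (hp : 0 < p) {φ φ' : ℝ → ℝ}
    (hpos : ∀ s : ℝ, 0 < s → 0 < φ s)
    (hderiv : ∀ s : ℝ, 0 < s → HasDerivAt φ (φ' s) s)
    (hlow : ∀ s : ℝ, 0 < s → -p * φ s < s * φ' s) :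
    StrictMonoOn (fun s => s * φ s ^ (1 / p)) (Ioi 0) := by
  have hg : ∀ s : ℝ, 0 < s → HasDerivAt (fun s => s * φ s ^ (1 / p))
      (φ s ^ (1 / p - 1) * ((p * φ s + s * φ' s) / p)) s := by
    intro s hs
    have hsplit : φ s ^ (1 / p) = φ s ^ (1 / p - 1) * φ s := by
      rw [← Real.rpow_add_one (hpos s hs).ne', sub_add_cancel]
    refine ((hasDerivAt_id s).mul
      ((hderiv s hs).rpow_const (Or.inl (hpos s hs).ne'))).congr_deriv ?_
    rw [hsplit, id]
    field_simp
  refine strictMonoOn_of_deriv_pos (convex_Ioi 0)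
    (fun s hs => (hg s hs).continuousAt.continuousWithinAt) fun s hs => ?_
  rw [interior_Ioi] at hs
  rw [(hg s hs).deriv]
  have hsum : 0 < p * φ s + s * φ' s := by linarith [hlow s hs]
  exact mul_pos (Real.rpow_pos_of_pos (hpos s hs) _) (div_pos hsum hp)

theorem condition_1_11_of_log_deriv_general (k : ℕ) (hk : 2 ≤ k) (φ φ' : ℝ → ℝ)
    (hpos : ∀ s : ℝ, 0 < s → 0 < φ s)
    (hderiv : ∀ s : ℝ, 0 < s → HasDerivAt φ (φ' s) s)
    (hlow : ∀ s : ℝ, 0 < s → -(k : ℝ) * φ s < s * φ' s)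
    (hupp : ∀ s : ℝ, 0 < s → s * φ' s < 0) :
    ∀ s t : ℝ, 0 < s → s < t →
      (s * φ s ^ (1 / (k : ℝ)) - t * φ t ^ (1 / (k : ℝ))) *
        (φ s ^ (((k : ℝ) - 1) / (k : ℝ)) - φ t ^ (((k : ℝ) - 1) / (k : ℝ))) < 0 := by
  intro s t hs hst
  have ht : 0 < t := hs.trans hst
  have hk' : (2 : ℝ) ≤ k := by exact_mod_cast hk
  have hexp : 0 < ((k : ℝ) - 1) / k := by apply div_pos <;> linarith
  have hmono : s * φ s ^ (1 / (k : ℝ)) < t * φ t ^ (1 / (k : ℝ)) :=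
    strictMonoOn_mul_rpow_one_div (by linarith) hpos hderiv hlow hs ht hst
  have hanti : φ t < φ s := strictAntiOn_Ioi_of_mul_deriv_neg hderiv hupp hs ht hst
  have hpow : φ t ^ (((k : ℝ) - 1) / k) < φ s ^ (((k : ℝ) - 1) / k) :=
    Real.rpow_lt_rpow (hpos t ht).le hanti hexp
  exact mul_neg_of_neg_of_pos (sub_neg.mpr hmono) (sub_pos.mpr hpow)

/-- If `φ : (0,∞) → (0,∞)` is `C¹` with `−k·φ(s) < s·φ'(s) < 0` for all `s > 0`
(i.e. `−k/s < (log φ)'(s) < 0`), then `φ` satisfies condition (1.11):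
`(s·φ(s)^{1/k} − t·φ(t)^{1/k}) · (φ(s)^{(k−1)/k} − φ(t)^{(k−1)/k}) < 0`
for all `t > s > 0`. -/
theorem condition_1_11_of_log_deriv (k : ℕ) (hk : 2 ≤ k) (φ φ' : ℝ → ℝ)
    (hpos : ∀ s : ℝ, 0 < s → 0 < φ s)
    (hderiv : ∀ s : ℝ, 0 < s → HasDerivAt φ (φ' s) s)
    (hcont : ContinuousOn φ' (Set.Ioi 0))
    (hlow : ∀ s : ℝ, 0 < s → -(k : ℝ) * φ s < s * φ' s)
    (hupp : ∀ s : ℝ, 0 < s → s * φ' s < 0) :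
    ∀ s t : ℝ, 0 < s → s < t →
      (s * φ s ^ (1 / (k : ℝ)) - t * φ t ^ (1 / (k : ℝ))) *
        (φ s ^ (((k : ℝ) - 1) / (k : ℝ)) - φ t ^ (((k : ℝ) - 1) / (k : ℝ))) < 0 :=
  condition_1_11_of_log_deriv_general k hk φ φ' hpos hderiv hlow hupp
end

section
/- Let k ≥ 2 be an integer, let μ ≥ 0 be a real, and let α, β be reals with 0 ≥ α > β > −k. Then the function φ(s) = μ·s^α + s^β satisfies condition (1.11): for all reals t > s > 0, (s·φ(s)^{1/k} − t·φ(t)^{1/k}) · (φ(s)^{(k−1)/k} − φ(t)^{(k−1)/k}) < 0. -/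
/-!
On `(0, ∞)` the function `φ` is strictly decreasing (both exponents are nonpositive, `β` strictly
negative), while `s ^ k * φ s = μ * s ^ (k + α) + s ^ (k + β)` is strictly increasing because
`k + α > k + β > 0`. Taking `k`-th roots, `s * φ s ^ (1 / k)` is strictly increasing, so the first
factor of (1.11) is negative and the second one positive.
-/

open Real Set

/-- Condition (1.11), with the integer `k` of the paper replaced by a real exponent `p`. -/
def SatisfiesCondition111 (p : ℝ) (φ : ℝ → ℝ) : Prop :=
  ∀ s t : ℝ, 0 < s → s < t →
    (s * φ s ^ (1 / p) - t * φ t ^ (1 / p)) * (φ s ^ ((p - 1) / p) - φ t ^ ((p - 1) / p)) < 0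

theorem satisfiesCondition111_of_strictAntiOn_of_strictMonoOn {p : ℝ} {φ : ℝ → ℝ} (hp : 1 < p)
    (hφ_pos : ∀ s, 0 < s → 0 < φ s) (hφ_anti : StrictAntiOn φ (Ioi 0))
    (hφ_mono : StrictMonoOn (fun s => s ^ p * φ s) (Ioi 0)) :
    SatisfiesCondition111 p φ := by
  intro s t hs hst
  have ht : 0 < t := hs.trans hst
  have root_eq : ∀ x, 0 < x → x * φ x ^ (1 / p) = (x ^ p * φ x) ^ (1 / p) := fun x hx => by
    rw [mul_rpow (rpow_nonneg hx.le p) (hφ_pos x hx).le, one_div,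
      rpow_rpow_inv hx.le (by linarith)]
  have first_neg : s * φ s ^ (1 / p) < t * φ t ^ (1 / p) := by
    rw [root_eq s hs, root_eq t ht]
    exact rpow_lt_rpow (mul_pos (rpow_pos_of_pos hs p) (hφ_pos s hs)).le
      (hφ_mono hs ht hst) (by positivity)
  have second_pos : φ t ^ ((p - 1) / p) < φ s ^ ((p - 1) / p) :=
    rpow_lt_rpow (hφ_pos t ht).le (hφ_anti hs ht hst) (div_pos (by linarith) (by linarith))
  exact mul_neg_of_neg_of_pos (sub_neg.2 first_neg) (sub_pos.2 second_pos)

section PowerSum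

variable {μ a b : ℝ}

theorem strictAntiOn_const_mul_rpow_add_rpow (hμ : 0 ≤ μ) (ha : a ≤ 0) (hb : b < 0) :
    StrictAntiOn (fun s : ℝ => μ * s ^ a + s ^ b) (Ioi 0) := fun _ hx _ hy hxy =>
  add_lt_add_of_le_of_lt
    (mul_le_mul_of_nonneg_left (antitoneOn_rpow_Ioi_of_exponent_nonpos ha hx hy hxy.le) hμ)
    (strictAntiOn_rpow_Ioi_of_exponent_neg hb hx hy hxy)

theorem strictMonoOn_const_mul_rpow_add_rpow (hμ : 0 ≤ μ) (ha : 0 ≤ a) (hb : 0 < b) :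
    StrictMonoOn (fun s : ℝ => μ * s ^ a + s ^ b) (Ioi 0) := fun _ hx _ hy hxy =>
  have hx' := Ioi_subset_Ici_self hx
  have hy' := Ioi_subset_Ici_self hy
  add_lt_add_of_le_of_lt
    (mul_le_mul_of_nonneg_left (monotoneOn_rpow_Ici_of_exponent_nonneg ha hx' hy' hxy.le) hμ)
    (strictMonoOn_rpow_Ici_of_exponent_pos hb hx' hy' hxy)

end PowerSum

/-- For `k ≥ 2`, `μ ≥ 0` and `0 ≥ α > β > −k`, the function `φ(s) = μ·s^α + s^β`
satisfies condition (1.11). -/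
theorem condition_1_11_of_sum_powers (k : ℕ) (hk : 2 ≤ k) (μ α β : ℝ)
    (hμ : 0 ≤ μ) (hα : α ≤ 0) (hβα : β < α) (hβ : -(k : ℝ) < β)
    (φ : ℝ → ℝ) (hφ : ∀ s : ℝ, φ s = μ * s ^ α + s ^ β) :
    ∀ s t : ℝ, 0 < s → s < t →
      (s * φ s ^ (1 / (k : ℝ)) - t * φ t ^ (1 / (k : ℝ))) *
        (φ s ^ (((k : ℝ) - 1) / (k : ℝ)) - φ t ^ (((k : ℝ) - 1) / (k : ℝ))) < 0 := by
  obtain rfl : φ = fun s => μ * s ^ α + s ^ β := funext hφ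
  have hk_gt_one : (1 : ℝ) < k := by exact_mod_cast hk
  refine satisfiesCondition111_of_strictAntiOn_of_strictMonoOn hk_gt_one
    (fun s hs => by positivity) (strictAntiOn_const_mul_rpow_add_rpow hμ hα (hβα.trans_le hα)) ?_
  refine (strictMonoOn_const_mul_rpow_add_rpow (a := k + α) (b := k + β) hμ (by linarith)
    (by linarith)).congr fun s (hs : 0 < s) => ?_
  simp only [rpow_add hs]
  ring
end

section
/- Let k ≥ 2 be an integer, let μ ≥ 0 be a real, and let α, β be reals with 0 ≤ α < β < k. Then the function φ(s) = (μ·s^α + s^β)^{−1} satisfies condition (1.11): for all reals t > s > 0, (s·φ(s)^{1/k} − t·φ(t)^{1/k}) · (φ(s)^{(k−1)/k} − φ(t)^{(k−1)/k}) < 0. -/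
/-!
`φ` is the reciprocal of the increasing function `μ s^α + s^β`, so the second factor is positive.
For the first factor write `s φ(s)^{1/k} = (μ s^{α-k} + s^{β-k})^{-1/k}`: both exponents are
negative because `α < β < k`, so the base decreases and the first factor is negative.
-/

open Real

section
variable {μ a b s t : ℝ}

lemma mul_rpow_add_rpow_lt (hμ : 0 ≤ μ) (ha : 0 ≤ a) (hb : 0 < b) (hs : 0 < s) (hst : s < t) :
    μ * s ^ a + s ^ b < μ * t ^ a + t ^ b :=
  add_lt_add_of_le_of_lt (mul_le_mul_of_nonneg_left (rpow_le_rpow hs.le hst.le ha) hμ)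
    (rpow_lt_rpow hs.le hst hb)

lemma mul_rpow_add_rpow_lt_of_neg (hμ : 0 ≤ μ) (ha : a < 0) (hb : b < 0) (hs : 0 < s)
    (hst : s < t) : μ * t ^ a + t ^ b < μ * s ^ a + s ^ b :=
  add_lt_add_of_le_of_lt (mul_le_mul_of_nonneg_left (rpow_le_rpow_of_nonpos hs hst.le ha.le) hμ)
    (rpow_lt_rpow_of_neg hs hst hb)

lemma mul_rpow_add_rpow_div_rpow (μ a b c : ℝ) (hs : 0 < s) :
    (μ * s ^ a + s ^ b) / s ^ c = μ * s ^ (a - c) + s ^ (b - c) := by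
  rw [add_div, mul_div_assoc, ← rpow_sub hs, ← rpow_sub hs]

end

lemma inv_rpow_lt_inv_rpow {A B e : ℝ} (hA : 0 < A) (hAB : A < B) (he : 0 < e) :
    B⁻¹ ^ e < A⁻¹ ^ e :=
  rpow_lt_rpow (inv_nonneg.2 (hA.trans hAB).le) (inv_strictAnti₀ hA hAB) he

lemma mul_inv_rpow_inv_eq {x C k : ℝ} (hx : 0 < x) (hC : 0 ≤ C) (hk : k ≠ 0) :
    x * C⁻¹ ^ k⁻¹ = (C / x ^ k)⁻¹ ^ k⁻¹ := by
  rw [inv_div, div_eq_mul_inv, mul_rpow (rpow_nonneg hx.le k) (inv_nonneg.2 hC),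
    rpow_rpow_inv hx.le hk]

/-- For `k ≥ 2`, `μ ≥ 0` and `0 ≤ α < β < k`, the function `φ(s) = (μ·s^α + s^β)⁻¹`
satisfies condition (1.11). -/
theorem condition_1_11_of_inv_sum_powers (k : ℕ) (hk : 2 ≤ k) (μ α β : ℝ)
    (hμ : 0 ≤ μ) (hα : 0 ≤ α) (hαβ : α < β) (hβ : β < (k : ℝ))
    (φ : ℝ → ℝ) (hφ : ∀ s : ℝ, φ s = (μ * s ^ α + s ^ β)⁻¹) :
    ∀ s t : ℝ, 0 < s → s < t →
      (s * φ s ^ (1 / (k : ℝ)) - t * φ t ^ (1 / (k : ℝ))) *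
        (φ s ^ (((k : ℝ) - 1) / (k : ℝ)) - φ t ^ (((k : ℝ) - 1) / (k : ℝ))) < 0 := by
  intro s t hs hst
  have ht : 0 < t := hs.trans hst
  have hk2 : (2 : ℝ) ≤ k := by exact_mod_cast hk
  have hk0 : (k : ℝ) ≠ 0 := by positivity
  have hfirst : s * φ s ^ (1 / (k : ℝ)) < t * φ t ^ (1 / (k : ℝ)) := by
    rw [hφ, hφ, one_div, mul_inv_rpow_inv_eq hs (by positivity) hk0,
      mul_inv_rpow_inv_eq ht (by positivity) hk0, mul_rpow_add_rpow_div_rpow μ α β k hs,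
      mul_rpow_add_rpow_div_rpow μ α β k ht]
    exact inv_rpow_lt_inv_rpow (by positivity)
      (mul_rpow_add_rpow_lt_of_neg hμ (by linarith) (by linarith) hs hst) (by positivity)
  have hsecond : φ t ^ (((k : ℝ) - 1) / (k : ℝ)) < φ s ^ (((k : ℝ) - 1) / (k : ℝ)) := by
    rw [hφ, hφ]
    exact inv_rpow_lt_inv_rpow (by positivity)
      (mul_rpow_add_rpow_lt hμ hα (hα.trans_lt hαβ) hs hst) (div_pos (by linarith) (by linarith))
  exact mul_neg_of_neg_of_pos (sub_neg.2 hfirst) (sub_pos.2 hsecond)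
end

section
/- Let k > l ≥ 0 be integers, let α be a real with 0 ≤ α < 1, and let φ : (0,∞) → (0,∞) be a continuously differentiable increasing function. Define ψ(s,t) = s^α · φ(t) for s, t > 0 and η(t) = φ(t)^{−(k−l−1)/(1−α)}. Then η is nonincreasing on (0,∞), and for all reals t > s > 0 the condition (1.20) holds: (s·ψ(1,1) − ψ(s,t)) · (η(1)·ψ(1,1)^{k−l−1} − η(t)·ψ(s,t)^{k−l−1}) ≤ 0. -/
/-!
Write `c = k - l - 1 = (1 - α) β` with `β ≥ 0`, so that `η = φ ^ (-β)`. Then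
`η t · ψ(s,t)^c = s^(αc) · φ(t)^(-αβ)`, and with `u = s^(1-α) φ(1)` both factors of (1.20)
become positive multiples of `u - φ(t)` and of `u^(-αβ) - φ(t)^(-αβ)`. These differences have
opposite signs because `x ↦ x^(-αβ)` is antitone on `(0,∞)`.
-/

open Real

lemma sub_mul_rpow_sub_rpow_nonpos {u v γ : ℝ} (hu : 0 < u) (hv : 0 < v) (hγ : γ ≤ 0) :
    (u - v) * (u ^ γ - v ^ γ) ≤ 0 := by
  rcases le_total u v with h | h
  · exact mul_nonpos_of_nonpos_of_nonneg (sub_nonpos.2 h)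
      (sub_nonneg.2 (rpow_le_rpow_of_nonpos hu h hγ))
  · exact mul_nonpos_of_nonneg_of_nonpos (sub_nonneg.2 h)
      (sub_nonpos.2 (rpow_le_rpow_of_nonpos hv h hγ))

lemma rpow_neg_mul_rpow_one_sub_mul {b : ℝ} (hb : 0 < b) (α β : ℝ) :
    b ^ (-β) * b ^ ((1 - α) * β) = b ^ (-(α * β)) := by
  rw [← rpow_add hb]
  ring_nf

lemma mul_sub_rpow_mul_eq_rpow_mul {s a b : ℝ} (hs : 0 < s) (ha : 0 < a) (hb : 0 < b)
    (α β : ℝ) :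
    (s * a - s ^ α * b) *
        (a ^ (-β) * a ^ ((1 - α) * β) - b ^ (-β) * (s ^ α * b) ^ ((1 - α) * β)) =
      s ^ α * s ^ (α * ((1 - α) * β)) *
        ((s ^ (1 - α) * a - b) * ((s ^ (1 - α) * a) ^ (-(α * β)) - b ^ (-(α * β)))) := by
  have hs_split : s = s ^ α * s ^ (1 - α) := by rw [← rpow_add hs]; simp
  have hu_pow : (s ^ (1 - α) * a) ^ (-(α * β)) =
      s ^ (-(α * ((1 - α) * β))) * a ^ (-(α * β)) := by
    rw [mul_rpow (rpow_pos_of_pos hs _).le ha.le, ← rpow_mul hs.le]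
    ring_nf
  have hs_cancel : s ^ (α * ((1 - α) * β)) * s ^ (-(α * ((1 - α) * β))) = 1 := by
    rw [← rpow_add hs]; simp
  rw [mul_rpow (rpow_pos_of_pos hs _).le hb.le, ← rpow_mul hs.le, mul_left_comm,
    rpow_neg_mul_rpow_one_sub_mul ha, rpow_neg_mul_rpow_one_sub_mul hb, hu_pow]
  nth_rewrite 1 [hs_split]
  linear_combination -(s ^ α * (s ^ (1 - α) * a - b) * a ^ (-(α * β))) * hs_cancel

theorem condition_1_20_of_power_times_increasing_general (k l : ℕ) (hlk : l < k)
    (α : ℝ) (hα0 : 0 ≤ α) (hα1 : α < 1)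
    (φ : ℝ → ℝ) (hpos : ∀ t : ℝ, 0 < t → 0 < φ t)
    (hmono : MonotoneOn φ (Set.Ioi 0))
    (ψ : ℝ → ℝ → ℝ) (hψ : ∀ s t : ℝ, ψ s t = s ^ α * φ t)
    (η : ℝ → ℝ) (hη : ∀ t : ℝ, η t = φ t ^ (-(((k : ℝ) - (l : ℝ) - 1) / (1 - α)))) :
    AntitoneOn η (Set.Ioi 0) ∧
    ∀ s t : ℝ, 0 < s → s < t →
      (s * ψ 1 1 - ψ s t) *
        (η 1 * ψ 1 1 ^ ((k : ℝ) - (l : ℝ) - 1) -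
          η t * ψ s t ^ ((k : ℝ) - (l : ℝ) - 1)) ≤ 0 := by
  set β := ((k : ℝ) - l - 1) / (1 - α)
  have hc : (k : ℝ) - l - 1 = (1 - α) * β := (mul_div_cancel₀ _ (by linarith)).symm
  have hlk' : (l : ℝ) + 1 ≤ k := by exact_mod_cast hlk
  have hβ : 0 ≤ β := div_nonneg (by linarith) (by linarith)
  refine ⟨fun a ha b hb hab => ?_, fun s t hs hst => ?_⟩
  · rw [hη, hη]
    exact rpow_le_rpow_of_nonpos (hpos a ha) (hmono ha hb hab) (neg_nonpos.2 hβ)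
  · have hφ1 := hpos 1 one_pos
    have hφt := hpos t (hs.trans hst)
    rw [hψ, hψ, hη, hη, one_rpow, one_mul, hc, mul_sub_rpow_mul_eq_rpow_mul hs hφ1 hφt]
    exact mul_nonpos_of_nonneg_of_nonpos (by positivity) <|
      sub_mul_rpow_sub_rpow_nonpos (by positivity) hφt (neg_nonpos.2 (by positivity))

/-- For integers `k > l ≥ 0`, `0 ≤ α < 1` and `φ : (0,∞) → (0,∞)` a `C¹` increasing
function, with `ψ(s,t) = s^α·φ(t)` and `η(t) = φ(t)^{−(k−l−1)/(1−α)}`: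
`η` is nonincreasing on `(0,∞)` and condition (1.20) holds:
`(s·ψ(1,1) − ψ(s,t)) · (η(1)·ψ(1,1)^{k−l−1} − η(t)·ψ(s,t)^{k−l−1}) ≤ 0` for `t > s > 0`. -/
theorem condition_1_20_of_power_times_increasing (k l : ℕ) (hlk : l < k)
    (α : ℝ) (hα0 : 0 ≤ α) (hα1 : α < 1)
    (φ : ℝ → ℝ) (hpos : ∀ t : ℝ, 0 < t → 0 < φ t)
    (hC1 : ContDiffOn ℝ 1 φ (Set.Ioi 0))
    (hmono : MonotoneOn φ (Set.Ioi 0))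
    (ψ : ℝ → ℝ → ℝ) (hψ : ∀ s t : ℝ, ψ s t = s ^ α * φ t)
    (η : ℝ → ℝ) (hη : ∀ t : ℝ, η t = φ t ^ (-(((k : ℝ) - (l : ℝ) - 1) / (1 - α)))) :
    AntitoneOn η (Set.Ioi 0) ∧
    ∀ s t : ℝ, 0 < s → s < t →
      (s * ψ 1 1 - ψ s t) *
        (η 1 * ψ 1 1 ^ ((k : ℝ) - (l : ℝ) - 1) -
          η t * ψ s t ^ ((k : ℝ) - (l : ℝ) - 1)) ≤ 0 :=
  condition_1_20_of_power_times_increasing_general k l hlk α hα0 hα1 φ hpos hmono ψ hψ η hη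
end

section
/- Let p be a real with −2 < p ≤ −1. Let u : ℝ → ℝ be a smooth 2π-periodic function with u > 0 and u'' + u > 0 everywhere, and suppose u solves the planar isotropic L_p Minkowski problem: u(θ)^{1−p} · (u''(θ) + u(θ)) = 1 for all θ ∈ ℝ. Then u is identically equal to 1. -/
open Real Set Filter Topology


/-- One-sided: nonneg on the left, zero at right endpoint ⇒ derivative ≤ 0. -/
lemma aux_deriv_nonpos_right {f : ℝ → ℝ} {d a b : ℝ} (hab : a < b)
    (hf : HasDerivAt f d b) (hfb : f b = 0)
    (hnn : ∀ θ ∈ Set.Ioo a b, 0 ≤ f θ) : d ≤ 0 := by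
  have h := hasDerivAt_iff_tendsto_slope.mp hf
  have h' : Tendsto (slope f b) (𝓝[<] b) (𝓝 d) :=
    h.mono_left (nhdsWithin_mono _ fun x hx => ne_of_lt hx)
  refine le_of_tendsto h' ?_
  filter_upwards [Ioo_mem_nhdsLT_of_mem (Set.mem_Ioc.mpr ⟨hab, le_refl b⟩)] with x hx
  rw [slope_def_field]
  have hx1 : 0 ≤ f x := hnn x hx
  have hx2 : x - b < 0 := by have := hx.2; linarith
  apply div_nonpos_of_nonneg_of_nonpos
  · rw [hfb]; linarith
  · linarith

/-- At a nondegenerate zero, sign flip. -/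
lemma aux_sign_flip {v : ℝ → ℝ} {d t : ℝ} (hv : HasDerivAt v d t) (hvt : v t = 0)
    (hd : d ≠ 0) : ∃ ε > 0, ∀ θ, θ ≠ t → |θ - t| < ε → 0 < v θ * d * (θ - t) := by
  have h := hasDerivAt_iff_tendsto_slope.mp hv
  have hmem : {x : ℝ | 0 < x * d} ∈ 𝓝 d :=
    (isOpen_lt continuous_const (continuous_id.mul continuous_const)).mem_nhds
      (by simp only [Set.mem_setOf_eq]; exact mul_self_pos.mpr hd)
  have hev : ∀ᶠ θ in 𝓝[≠] t, 0 < slope v t θ * d := h hmem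
  rw [eventually_nhdsWithin_iff] at hev
  rcases Metric.eventually_nhds_iff.mp hev with ⟨ε, hε, hb⟩
  refine ⟨ε, hε, fun θ hθ hθε => ?_⟩
  have hs : 0 < slope v t θ * d := hb (by simpa [Real.dist_eq] using hθε) hθ
  have hne : θ - t ≠ 0 := sub_ne_zero.mpr hθ
  have h2 : v θ * d * (θ - t) = (slope v t θ * d) * (θ - t) ^ 2 := by
    rw [slope_def_field, hvt]
    field_simp
    ring
  rw [h2]
  exact mul_pos hs (by positivity)

/-- Sturm: gap between consecutive zeros is < π when the potential exceeds 1. -/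
lemma aux_sturm_upper {v v' q : ℝ → ℝ} (hv : ∀ θ, HasDerivAt v (v' θ) θ)
    (hv' : ∀ θ, HasDerivAt v' (-(q θ) * v θ) θ) (hq : ∀ θ, 1 < q θ)
    {a b : ℝ} (hab : a < b) (hva : v a = 0) (hvb : v b = 0)
    (hpos : ∀ θ ∈ Set.Ioo a b, 0 < v θ) : b - a < π := by
  by_contra hcon
  push_neg at hcon
  set W : ℝ → ℝ := fun θ => v θ * Real.cos (θ - a) - v' θ * Real.sin (θ - a) with hWdef
  have hW : ∀ θ, HasDerivAt W ((q θ - 1) * v θ * Real.sin (θ - a)) θ := by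
    intro θ
    have hc : HasDerivAt (fun θ : ℝ => Real.cos (θ - a)) (-Real.sin (θ - a)) θ := by
      have := (Real.hasDerivAt_cos (θ - a)).comp θ ((hasDerivAt_id θ).sub_const a)
      simp at this; exact this
    have hssin : HasDerivAt (fun θ : ℝ => Real.sin (θ - a)) (Real.cos (θ - a)) θ := by
      have := (Real.hasDerivAt_sin (θ - a)).comp θ ((hasDerivAt_id θ).sub_const a)
      simp at this; exact this
    have := ((hv θ).mul hc).sub ((hv' θ).mul hssin)
    refine this.congr_deriv ?_
    ring
  have hWc : Continuous W := by
    have h1 : Differentiable ℝ W := fun θ => (hW θ).differentiableAt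
    exact h1.continuous
  have hmono : StrictMonoOn W (Set.Icc a (a + π)) := by
    apply strictMonoOn_of_deriv_pos (convex_Icc _ _) hWc.continuousOn
    intro θ hθ
    rw [interior_Icc] at hθ
    rw [(hW θ).deriv]
    have h1 : 0 < Real.sin (θ - a) :=
      Real.sin_pos_of_pos_of_lt_pi (by linarith [hθ.1]) (by linarith [hθ.2])
    have h2 : 0 < v θ := hpos θ ⟨hθ.1, by linarith [hθ.2, hcon]⟩
    have h3 : 0 < q θ - 1 := by linarith [hq θ]
    positivity
  have hWa : W a = 0 := by simp [hWdef, hva]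
  have hlt : 0 < W (a + π) := by
    have := hmono (Set.left_mem_Icc.mpr (by linarith [Real.pi_pos]))
      (Set.right_mem_Icc.mpr (by linarith [Real.pi_pos])) (by linarith [Real.pi_pos])
    rwa [hWa] at this
  have hWapi : W (a + π) = -v (a + π) := by
    simp [hWdef, add_sub_cancel_left, Real.cos_pi, Real.sin_pi]
  have hge : 0 ≤ v (a + π) := by
    rcases eq_or_lt_of_le hcon with h | h
    · rw [show a + π = b by linarith]; exact le_of_eq hvb.symm
    · exact le_of_lt (hpos _ ⟨by linarith [Real.pi_pos], by linarith⟩)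
  rw [hWapi] at hlt
  linarith

/-- Sturm: gap between consecutive zeros is > π/2 when the potential is below 4. -/
lemma aux_sturm_lower {z z' Q : ℝ → ℝ} (hz : ∀ θ, HasDerivAt z (z' θ) θ)
    (hz' : ∀ θ, HasDerivAt z' (-(Q θ) * z θ) θ) (hQ : ∀ θ, Q θ < 4)
    {a b : ℝ} (hab : a < b) (hza : z a = 0) (hzb : z b = 0)
    (hpos : ∀ θ ∈ Set.Ioo a b, 0 < z θ) : π / 2 < b - a := by
  by_contra hcon
  push_neg at hcon
  set W : ℝ → ℝ := fun θ => z θ * (2 * Real.cos (2 * (θ - a))) - z' θ * Real.sin (2 * (θ - a))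
    with hWdef
  have hW : ∀ θ, HasDerivAt W ((Q θ - 4) * z θ * Real.sin (2 * (θ - a))) θ := by
    intro θ
    have hlin : HasDerivAt (fun θ : ℝ => 2 * (θ - a)) 2 θ := by
      simpa using ((hasDerivAt_id θ).sub_const a).const_mul 2
    have hc : HasDerivAt (fun θ : ℝ => 2 * Real.cos (2 * (θ - a)))
        (-Real.sin (2 * (θ - a)) * 2 * 2) θ := by
      have := ((Real.hasDerivAt_cos (2 * (θ - a))).comp θ hlin).const_mul 2
      refine this.congr_deriv ?_
      ring
    have hs2 : HasDerivAt (fun θ : ℝ => Real.sin (2 * (θ - a)))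
        (Real.cos (2 * (θ - a)) * 2) θ := by have := (Real.hasDerivAt_sin (2 * (θ - a))).comp θ hlin; exact this
    have := ((hz θ).mul hc).sub ((hz' θ).mul hs2)
    refine this.congr_deriv ?_
    ring
  have hWd : Differentiable ℝ W := fun θ => (hW θ).differentiableAt
  have hWc : Continuous W := hWd.continuous
  have hanti : StrictAntiOn W (Set.Icc a b) := by
    apply strictAntiOn_of_deriv_neg (convex_Icc _ _) hWc.continuousOn
    intro θ hθ
    rw [interior_Icc] at hθ
    rw [(hW θ).deriv]
    have h1 : 0 < Real.sin (2 * (θ - a)) := by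
      apply Real.sin_pos_of_pos_of_lt_pi (by linarith [hθ.1])
      have := hθ.2; nlinarith
    have h2 : 0 < z θ := hpos θ hθ
    have h3 : Q θ - 4 < 0 := by linarith [hQ θ]
    nlinarith [mul_neg_of_neg_of_pos h3 (mul_pos h2 h1)]
  have hWa : W a = 0 := by simp [hWdef, hza]
  have hlt : W b < 0 := by
    have := hanti (Set.left_mem_Icc.mpr (le_of_lt hab)) (Set.right_mem_Icc.mpr (le_of_lt hab)) hab
    rwa [hWa] at this
  have hsin : 0 ≤ Real.sin (2 * (b - a)) := by
    apply Real.sin_nonneg_of_nonneg_of_le_pi (by nlinarith)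
    nlinarith [Real.pi_pos]
  have hz'b : z' b ≤ 0 :=
    aux_deriv_nonpos_right hab (hz b) hzb fun θ hθ => le_of_lt (hpos θ hθ)
  have hWb : W b = -(z' b * Real.sin (2 * (b - a))) := by
    simp [hWdef, hzb]
  rw [hWb] at hlt
  nlinarith [mul_nonpos_of_nonpos_of_nonneg hz'b hsin]

set_option maxHeartbeats 1000000 in
/-- Uniqueness for the planar isotropic `L_p` Minkowski problem
`u^{1−p}·(u''+u) = 1` for `−2 < p ≤ −1`: the only solution is `u ≡ 1`. -/
theorem planar_Lp_Minkowski_uniqueness (p : ℝ) (hp1 : -2 < p) (hp2 : p ≤ -1)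
    (u : ℝ → ℝ) (hu : ContDiff ℝ (⊤ : ℕ∞) u)
    (hper : Function.Periodic u (2 * Real.pi))
    (hpos : ∀ θ : ℝ, 0 < u θ)
    (hconv : ∀ θ : ℝ, 0 < deriv (deriv u) θ + u θ)
    (heq : ∀ θ : ℝ, u θ ^ (1 - p) * (deriv (deriv u) θ + u θ) = 1) :
    ∀ θ : ℝ, u θ = 1 := by
  have hu' : ContDiff ℝ ((⊤ : ℕ∞) : WithTop ℕ∞) u := hu.of_le (by simp)
  have hud : Differentiable ℝ u := hu'.differentiable (by norm_num)
  have hu1 : ContDiff ℝ ((⊤ : ℕ∞) : WithTop ℕ∞) (deriv u) := (contDiff_infty_iff_deriv.mp hu').2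
  have hu1d : Differentiable ℝ (deriv u) := hu1.differentiable (by norm_num)
  have hu2 : ContDiff ℝ ((⊤ : ℕ∞) : WithTop ℕ∞) (deriv (deriv u)) := (contDiff_infty_iff_deriv.mp hu1).2
  have hune : ∀ θ, u θ ≠ 0 := fun θ => (hpos θ).ne'
  have hvd : ∀ θ, HasDerivAt u (deriv u θ) θ := fun θ => (hud θ).hasDerivAt
  have hv2d : ∀ θ, HasDerivAt (deriv u) (deriv (deriv u) θ) θ := fun θ => (hu1d θ).hasDerivAt
  -- the ODE: u'' = u^{p-1} - u
  have key1 : ∀ θ, deriv (deriv u) θ = u θ ^ (p - 1) - u θ := by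
    intro θ
    have hA : (0:ℝ) < u θ ^ (1 - p) := Real.rpow_pos_of_pos (hpos θ) _
    have hAB : u θ ^ (1 - p) * u θ ^ (p - 1) = 1 := by
      rw [← Real.rpow_add (hpos θ)]; norm_num
    have h2 : u θ ^ (1 - p) * (deriv (deriv u) θ + u θ) = u θ ^ (1 - p) * u θ ^ (p - 1) := by
      rw [heq θ, hAB]
    have h3 := mul_left_cancel₀ (ne_of_gt hA) h2
    linarith
  -- u * u^{p-2} = u^{p-1}
  have hup : ∀ θ, u θ * u θ ^ (p - 2) = u θ ^ (p - 1) := by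
    intro θ
    have h := Real.rpow_add (hpos θ) 1 (p - 2)
    rw [Real.rpow_one] at h
    rw [show p - 1 = 1 + (p - 2) by ring, h]
  -- third derivative
  have key2 : ∀ θ, HasDerivAt (deriv (deriv u)) (((p - 1) * u θ ^ (p - 2) - 1) * deriv u θ) θ := by
    intro θ
    have hfun : deriv (deriv u) = fun s => u s ^ (p - 1) - u s := funext key1
    rw [hfun]
    have h1 : HasDerivAt (fun s => u s ^ (p - 1)) (deriv u θ * (p - 1) * u θ ^ (p - 1 - 1)) θ :=
      (hvd θ).rpow_const (Or.inl (hune θ))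
    have h2 := h1.sub (hvd θ)
    refine h2.congr_deriv ?_
    rw [show p - 1 - 1 = p - 2 by ring]
    ring
  -- Hill equation for v = u'
  have hqgt : ∀ θ, 1 < 1 + (1 - p) * u θ ^ (p - 2) := by
    intro θ
    have h := Real.rpow_pos_of_pos (hpos θ) (p - 2)
    nlinarith
  have hVhill : ∀ θ, HasDerivAt (deriv (deriv u))
      (-(1 + (1 - p) * u θ ^ (p - 2)) * deriv u θ) θ := by
    intro θ
    convert key2 θ using 1
    ring
  -- zeta = (u²)' and its Hill equation
  have hzeta : ∀ θ, HasDerivAt (fun s => 2 * u s * deriv u s)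
      (2 * ((deriv u θ) ^ 2 + u θ * deriv (deriv u) θ)) θ := by
    intro θ
    have h := ((hvd θ).const_mul 2).mul (hv2d θ)
    refine h.congr_deriv ?_
    ring
  have hQlt : ∀ θ, 4 - (p + 2) * u θ ^ (p - 2) < 4 := by
    intro θ
    have h := Real.rpow_pos_of_pos (hpos θ) (p - 2)
    nlinarith
  have hzeta' : ∀ θ, HasDerivAt (fun s => 2 * ((deriv u s) ^ 2 + u s * deriv (deriv u) s))
      (-(4 - (p + 2) * u θ ^ (p - 2)) * (2 * u θ * deriv u θ)) θ := by
    intro θ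
    have h1 : HasDerivAt (fun s => (deriv u s) ^ 2) (2 * deriv u θ * deriv (deriv u) θ) θ := by
      have := (hv2d θ).pow 2
      refine this.congr_deriv ?_
      push_cast
      ring
    have h2 := (hvd θ).mul (key2 θ)
    have h3 := (h1.add h2).const_mul 2
    refine h3.congr_deriv ?_
    rw [key1 θ]
    linear_combination (-6 * deriv u θ) * hup θ
  -- energy is constant
  have hE : ∀ θ, HasDerivAt (fun s => (deriv u s) ^ 2 + (u s) ^ 2 - (2 / p) * u s ^ p) 0 θ := by
    intro θ
    have hpne : p ≠ 0 := by linarith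
    have h1 := (hv2d θ).pow 2
    have h2 := (hvd θ).pow 2
    have h3 := ((hvd θ).rpow_const (p := p) (Or.inl (hune θ))).const_mul (2 / p)
    have h4 := (h1.add h2).sub h3
    refine h4.congr_deriv ?_
    rw [key1 θ]
    push_cast
    field_simp
    ring
  have hEconst : ∀ x y : ℝ, (deriv u x) ^ 2 + (u x) ^ 2 - (2 / p) * u x ^ p
      = (deriv u y) ^ 2 + (u y) ^ 2 - (2 / p) * u y ^ p :=
    is_const_of_deriv_eq_zero (fun θ => (hE θ).differentiableAt) (fun θ => (hE θ).deriv)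
  -- AM-GM : the potential is minimized at 1
  have hAM : ∀ x : ℝ, 0 < x → 1 - 2 / p ≤ x ^ 2 - (2 / p) * x ^ p := by
    intro x hx
    have h2p : (0:ℝ) < 2 - p := by linarith
    have hw1 : (0:ℝ) ≤ -p / (2 - p) := div_nonneg (by linarith) h2p.le
    have hw2 : (0:ℝ) ≤ 2 / (2 - p) := div_nonneg (by norm_num) h2p.le
    have hgm := Real.geom_mean_le_arith_mean2_weighted hw1 hw2
      (Real.rpow_pos_of_pos hx 2).le (Real.rpow_pos_of_pos hx p).le
      (by field_simp; ring)
    have hlhs : (x ^ (2:ℝ)) ^ (-p / (2 - p)) * (x ^ p) ^ (2 / (2 - p)) = 1 := by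
      rw [← Real.rpow_mul hx.le, ← Real.rpow_mul hx.le, ← Real.rpow_add hx,
        show (2:ℝ) * (-p / (2 - p)) + p * (2 / (2 - p)) = 0 by field_simp; ring,
        Real.rpow_zero]
    rw [hlhs] at hgm
    have hx2 : x ^ (2:ℝ) = x ^ 2 := by
      rw [show (2:ℝ) = ((2:ℕ):ℝ) by norm_num, Real.rpow_natCast]
    rw [hx2] at hgm
    have hpneg : p < 0 := by linarith
    have h5 : 2 - p ≤ -p * x ^ 2 + 2 * x ^ p := by
      have h6 := mul_le_mul_of_nonneg_left hgm h2p.le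
      have h7 : (2 - p) * (-p / (2 - p) * x ^ 2 + 2 / (2 - p) * x ^ p)
          = -p * x ^ 2 + 2 * x ^ p := by field_simp
      rw [h7, mul_one] at h6
      exact h6
    have hpne' : p ≠ 0 := ne_of_lt hpneg
    have h8 : (2 - p) / (-p) ≤ (-p * x ^ 2 + 2 * x ^ p) / (-p) :=
      div_le_div_of_nonneg_right h5 (by linarith)
    have e1 : (2 - p) / (-p) = 1 - 2 / p := by
      rw [div_eq_iff (by simpa using hpne' : -p ≠ 0)]; field_simp; ring
    have e2 : (-p * x ^ 2 + 2 * x ^ p) / (-p) = x ^ 2 - (2 / p) * x ^ p := by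
      rw [div_eq_iff (by simpa using hpne' : -p ≠ 0)]; field_simp; ring
    rw [e1, e2] at h8
    exact h8
  -- reduce to showing u' ≡ 0
  have hconst0 : (∀ θ, deriv u θ = 0) → ∀ θ, u θ = 1 := by
    intro hc θ
    have hdd : deriv (deriv u) θ = 0 := by
      have hzero : deriv u = fun _ => (0:ℝ) := funext hc
      rw [hzero]
      simp
    have h1 := heq θ
    rw [hdd, zero_add] at h1
    have h2 : u θ ^ (2 - p) = 1 := by
      rw [show (2 - p) = (1 - p) + 1 by ring, Real.rpow_add (hpos θ), Real.rpow_one]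
      exact h1
    have hl := congrArg Real.log h2
    rw [Real.log_rpow (hpos θ), Real.log_one] at hl
    have hlog : Real.log (u θ) = 0 := by
      rcases mul_eq_zero.mp hl with h | h
      · linarith
      · exact h
    rw [← Real.exp_log (hpos θ), hlog, Real.exp_zero]
  by_cases hcase : ∀ θ, deriv u θ = 0
  · exact hconst0 hcase
  push_neg at hcase
  obtain ⟨θs, hstar⟩ := hcase
  exfalso
  -- nondegeneracy of zeros of u'
  have hnd : ∀ t, deriv u t = 0 → deriv (deriv u) t ≠ 0 := by
    intro t h0 h2
    have h3 : u t ^ (p - 1) = u t := by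
      have := key1 t
      rw [h2] at this
      linarith
    have hu1t : u t = 1 := by
      have hl := congrArg Real.log h3
      rw [Real.log_rpow (hpos t)] at hl
      have hlog : Real.log (u t) = 0 := by
        have h4 : (p - 2) * Real.log (u t) = 0 := by linarith
        rcases mul_eq_zero.mp h4 with h | h
        · linarith
        · exact h
      rw [← Real.exp_log (hpos t), hlog, Real.exp_zero]
    have hEt : (deriv u t) ^ 2 + (u t) ^ 2 - (2 / p) * u t ^ p = 1 - 2 / p := by
      rw [h0, hu1t]
      simp [Real.one_rpow]
    have hEs := hEconst θs t
    rw [hEt] at hEs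
    have h6 := hAM (u θs) (hpos θs)
    have h7 : 0 < (deriv u θs) ^ 2 := pow_two_pos_of_ne_zero hstar
    nlinarith
  -- periodicity of the derivative
  have hvper : ∀ θ, deriv u (θ + 2 * π) = deriv u θ := by
    intro θ
    have h1 : HasDerivAt (fun x => u (x + 2 * π)) (deriv u (θ + 2 * π)) θ := by
      have := (hvd (θ + 2 * π)).comp θ ((hasDerivAt_id θ).add_const (2 * π))
      simp at this; exact this
    have h2 : (fun x => u (x + 2 * π)) = u := funext fun x => hper x
    rw [h2] at h1
    exact h1.deriv.symm
  -- Rolle: a zero of u' in every period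
  have hrolle : ∀ c : ℝ, ∃ t ∈ Set.Ioo c (c + 2 * π), deriv u t = 0 := by
    intro c
    have h1 : c < c + 2 * π := by linarith [Real.pi_pos]
    exact exists_deriv_eq_zero h1 hu.continuous.continuousOn (hper c).symm
  have hvcont : Continuous (deriv u) := hu1.continuous
  -- next zero
  have hnext : ∀ t, deriv u t = 0 →
      ∃ s, t < s ∧ deriv u s = 0 ∧ ∀ x ∈ Set.Ioo t s, deriv u x ≠ 0 := by
    intro t ht
    obtain ⟨ε, hε, hflip⟩ := aux_sign_flip (hv2d t) ht (hnd t ht)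
    have hnozero : ∀ x, t < x → x < t + ε → deriv u x ≠ 0 := by
      intro x hx1 hx2 h0
      have := hflip x (ne_of_gt hx1) (by rw [abs_of_pos (by linarith : (0:ℝ) < x - t)]; linarith)
      rw [h0] at this
      simp at this
    have hSclosed : IsClosed ({s | deriv u s = 0} ∩ Set.Ici (t + ε)) :=
      (isClosed_eq hvcont continuous_const).inter isClosed_Ici
    have hSne : ({s | deriv u s = 0} ∩ Set.Ici (t + ε)).Nonempty := by
      obtain ⟨s, hs, hs0⟩ := hrolle t
      refine ⟨s, hs0, ?_⟩
      by_contra hcon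
      simp only [Set.mem_Ici, not_le] at hcon
      exact hnozero s hs.1 hcon hs0
    have hSbdd : BddBelow ({s | deriv u s = 0} ∩ Set.Ici (t + ε)) :=
      ⟨t + ε, fun x hx => hx.2⟩
    have hbS := hSclosed.csInf_mem hSne hSbdd
    refine ⟨sInf ({s | deriv u s = 0} ∩ Set.Ici (t + ε)), ?_, hbS.1, ?_⟩
    · have := hbS.2
      simp only [Set.mem_Ici] at this
      linarith
    · intro x hx h0
      rcases lt_or_ge x (t + ε) with h | h
      · exact hnozero x hx.1 h h0
      · exact absurd (csInf_le hSbdd ⟨h0, h⟩) (not_le.mpr hx.2)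
  -- constant sign on gaps
  have hsame : ∀ a b : ℝ, (∀ x ∈ Set.Ioo a b, deriv u x ≠ 0) →
      ∀ x ∈ Set.Ioo a b, ∀ y ∈ Set.Ioo a b, 0 < deriv u x * deriv u y := by
    intro a b hne x hx y hy
    rcases lt_trichotomy (deriv u x * deriv u y) 0 with h | h | h
    · exfalso
      have hx0 := hne x hx
      have hy0 := hne y hy
      have h0m : (0:ℝ) ∈ Set.uIcc (deriv u x) (deriv u y) := by
        rcases le_or_gt (deriv u x) 0 with h1 | h1 <;> rcases le_or_gt (deriv u y) 0 with h2 | h2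
        · nlinarith
        · exact Set.mem_uIcc.mpr (Or.inl ⟨h1, h2.le⟩)
        · exact Set.mem_uIcc.mpr (Or.inr ⟨h2, h1.le⟩)
        · nlinarith
      obtain ⟨c, hc1, hc2⟩ := intermediate_value_uIcc hvcont.continuousOn h0m
      have hcmem : c ∈ Set.Ioo a b := Set.ordConnected_Ioo.uIcc_subset hx hy hc1
      exact hne c hcmem hc2
    · exact absurd h (mul_ne_zero (hne x hx) (hne y hy))
    · exact h
  -- gap bounds via Sturm comparison
  have hgap : ∀ a b : ℝ, a < b → deriv u a = 0 → deriv u b = 0 →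
      (∀ x ∈ Set.Ioo a b, deriv u x ≠ 0) → π / 2 < b - a ∧ b - a < π := by
    intro a b hab ha hb hne
    have hm : (a + b) / 2 ∈ Set.Ioo a b := ⟨by linarith, by linarith⟩
    rcases (hne _ hm).lt_or_gt with hneg | hposm
    · -- u' < 0 on the gap
      have hvneg : ∀ x ∈ Set.Ioo a b, 0 < -deriv u x := by
        intro x hx
        have := hsame a b hne x hx _ hm
        nlinarith
      constructor
      · refine aux_sturm_lower (z := fun s => -(2 * u s * deriv u s))
          (z' := fun s => -(2 * ((deriv u s) ^ 2 + u s * deriv (deriv u) s)))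
          (Q := fun s => 4 - (p + 2) * u s ^ (p - 2))
          (fun θ => (hzeta θ).neg) (fun θ => ?_) hQlt hab (by simp [ha]) (by simp [hb]) ?_
        · have := (hzeta' θ).neg
          refine this.congr_deriv ?_
          ring
        · intro x hx
          have h1 := hvneg x hx
          have h2 := hpos x
          show 0 < -(2 * u x * deriv u x)
          nlinarith
      · refine aux_sturm_upper (v := fun s => -deriv u s)
          (v' := fun s => -deriv (deriv u) s)
          (q := fun s => 1 + (1 - p) * u s ^ (p - 2))
          (fun θ => (hv2d θ).neg) (fun θ => ?_) hqgt hab (by simp [ha]) (by simp [hb]) hvneg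
        have := (hVhill θ).neg
        refine this.congr_deriv ?_
        ring
    · -- u' > 0 on the gap
      have hvpos : ∀ x ∈ Set.Ioo a b, 0 < deriv u x := by
        intro x hx
        have := hsame a b hne x hx _ hm
        nlinarith
      constructor
      · refine aux_sturm_lower (z := fun s => 2 * u s * deriv u s)
          (z' := fun s => 2 * ((deriv u s) ^ 2 + u s * deriv (deriv u) s))
          (Q := fun s => 4 - (p + 2) * u s ^ (p - 2))
          hzeta hzeta' hQlt hab (by simp [ha]) (by simp [hb]) ?_
        intro x hx
        have h1 := hvpos x hx
        have h2 := hpos x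
        show 0 < 2 * u x * deriv u x
        nlinarith
      · exact aux_sturm_upper (v := deriv u) (v' := deriv (deriv u))
          (q := fun s => 1 + (1 - p) * u s ^ (p - 2))
          hv2d hVhill hqgt hab ha hb hvpos
  -- build four consecutive zeros
  obtain ⟨t0, _, ht0⟩ := hrolle 0
  obtain ⟨t1, h01, ht1, hgap0⟩ := hnext t0 ht0
  obtain ⟨t2, h12, ht2, hgap1⟩ := hnext t1 ht1
  obtain ⟨t3, h23, ht3, hgap2⟩ := hnext t2 ht2
  obtain ⟨g0l, g0u⟩ := hgap t0 t1 h01 ht0 ht1 hgap0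
  obtain ⟨g1l, g1u⟩ := hgap t1 t2 h12 ht1 ht2 hgap1
  obtain ⟨g2l, g2u⟩ := hgap t2 t3 h23 ht2 ht3 hgap2
  have hz2 : deriv u (t0 + 2 * π) = 0 := by rw [hvper t0]; exact ht0
  have h3eq : t3 = t0 + 2 * π := by
    have hle : t3 ≤ t0 + 2 * π := by
      by_contra hl
      push_neg at hl
      exact hgap2 (t0 + 2 * π) ⟨by linarith, hl⟩ hz2
    rcases eq_or_lt_of_le hle with h | h
    · exact h
    · exfalso
      obtain ⟨t4, h34, ht4, hgap3⟩ := hnext t3 ht3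
      obtain ⟨g3l, _⟩ := hgap t3 t4 h34 ht3 ht4 hgap3
      have ht4le : t4 ≤ t0 + 2 * π := by
        by_contra hl
        push_neg at hl
        exact hgap3 (t0 + 2 * π) ⟨h, hl⟩ hz2
      linarith
  -- the sign chain contradiction
  have hd1 := hnd t1 ht1
  have hd2 := hnd t2 ht2
  have hd3 := hnd t3 ht3
  obtain ⟨ε1, hε1, hf1⟩ := aux_sign_flip (hv2d t1) ht1 hd1
  obtain ⟨ε2, hε2, hf2⟩ := aux_sign_flip (hv2d t2) ht2 hd2
  obtain ⟨ε3, hε3, hf3⟩ := aux_sign_flip (hv2d t3) ht3 hd3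
  set ε : ℝ := min (min ε1 ε2) (min ε3 (π / 4)) / 2 with hεdef
  have hεpos : 0 < ε := by
    apply div_pos _ two_pos
    exact lt_min (lt_min hε1 hε2) (lt_min hε3 (by positivity))
  have hεe1 : ε < ε1 := by
    have h1 : min (min ε1 ε2) (min ε3 (π / 4)) ≤ ε1 := le_trans (min_le_left _ _) (min_le_left _ _)
    have := hεpos
    rw [hεdef] at *
    linarith
  have hεe2 : ε < ε2 := by
    have h1 : min (min ε1 ε2) (min ε3 (π / 4)) ≤ ε2 := le_trans (min_le_left _ _) (min_le_right _ _)
    have := hεpos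
    rw [hεdef] at *
    linarith
  have hεe3 : ε < ε3 := by
    have h1 : min (min ε1 ε2) (min ε3 (π / 4)) ≤ ε3 := le_trans (min_le_right _ _) (min_le_left _ _)
    have := hεpos
    rw [hεdef] at *
    linarith
  have hεpi : ε < π / 2 := by
    have h1 : min (min ε1 ε2) (min ε3 (π / 4)) ≤ π / 4 :=
      le_trans (min_le_right _ _) (min_le_right _ _)
    have := Real.pi_pos
    rw [hεdef] at *
    linarith
  -- membership of sample points in gaps
  have hm0a : t0 + ε ∈ Set.Ioo t0 t1 := ⟨by linarith, by linarith⟩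
  have hm0b : t1 - ε ∈ Set.Ioo t0 t1 := ⟨by linarith, by linarith⟩
  have hm1a : t1 + ε ∈ Set.Ioo t1 t2 := ⟨by linarith, by linarith⟩
  have hm1b : t2 - ε ∈ Set.Ioo t1 t2 := ⟨by linarith, by linarith⟩
  have hm2a : t2 + ε ∈ Set.Ioo t2 t3 := ⟨by linarith, by linarith⟩
  have hm2b : t3 - ε ∈ Set.Ioo t2 t3 := ⟨by linarith, by linarith⟩
  -- abbreviations
  have hPA : 0 < deriv u (t0 + ε) * deriv u (t1 - ε) := hsame t0 t1 hgap0 _ hm0a _ hm0b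
  have hBC : 0 < deriv u (t1 + ε) * deriv u (t2 - ε) := hsame t1 t2 hgap1 _ hm1a _ hm1b
  have hDE : 0 < deriv u (t2 + ε) * deriv u (t3 - ε) := hsame t2 t3 hgap2 _ hm2a _ hm2b
  -- sign flips at t1, t2, t3
  have hflip : ∀ t : ℝ, ∀ εt : ℝ, deriv (deriv u) t ≠ 0 → ε < εt →
      (∀ θ : ℝ, θ ≠ t → |θ - t| < εt → 0 < deriv u θ * deriv (deriv u) t * (θ - t)) →
      deriv u (t - ε) * deriv u (t + ε) < 0 := by
    intro t εt hd hεlt hf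
    have hL := hf (t - ε) (by intro h; nlinarith [hεpos]) (by rw [show t - ε - t = -ε by ring, abs_neg, abs_of_pos hεpos]; exact hεlt)
    have hR := hf (t + ε) (by intro h; nlinarith [hεpos]) (by rw [show t + ε - t = ε by ring, abs_of_pos hεpos]; exact hεlt)
    rw [show t - ε - t = -ε by ring] at hL
    rw [show t + ε - t = ε by ring] at hR
    have h1 : deriv u (t - ε) * deriv (deriv u) t < 0 := by nlinarith
    have h2 : 0 < deriv u (t + ε) * deriv (deriv u) t := by nlinarith
    have h3 := mul_neg_of_neg_of_pos h1 h2
    have h4 : 0 < (deriv (deriv u) t) ^ 2 := pow_two_pos_of_ne_zero hd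
    nlinarith
  have hAB : deriv u (t1 - ε) * deriv u (t1 + ε) < 0 := hflip t1 ε1 hd1 hεe1 hf1
  have hCD : deriv u (t2 - ε) * deriv u (t2 + ε) < 0 := hflip t2 ε2 hd2 hεe2 hf2
  have hEF : deriv u (t3 - ε) * deriv u (t3 + ε) < 0 := hflip t3 ε3 hd3 hεe3 hf3
  have hFP : deriv u (t3 + ε) = deriv u (t0 + ε) := by
    rw [h3eq, show t0 + 2 * π + ε = (t0 + ε) + 2 * π by ring, hvper]
  rw [hFP] at hEF
  -- combine : product of the three positive facts equals product of the three negative facts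
  have hX : 0 < (deriv u (t0 + ε) * deriv u (t1 - ε)) *
      ((deriv u (t1 + ε) * deriv u (t2 - ε)) * (deriv u (t2 + ε) * deriv u (t3 - ε))) :=
    mul_pos hPA (mul_pos hBC hDE)
  have hY : ((deriv u (t1 - ε) * deriv u (t1 + ε)) *
      (deriv u (t2 - ε) * deriv u (t2 + ε))) * (deriv u (t3 - ε) * deriv u (t0 + ε)) < 0 :=
    mul_neg_of_pos_of_neg (mul_pos_of_neg_of_neg hAB hCD) hEF
  have hXY : (deriv u (t0 + ε) * deriv u (t1 - ε)) *
      ((deriv u (t1 + ε) * deriv u (t2 - ε)) * (deriv u (t2 + ε) * deriv u (t3 - ε)))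
      = ((deriv u (t1 - ε) * deriv u (t1 + ε)) *
      (deriv u (t2 - ε) * deriv u (t2 + ε))) * (deriv u (t3 - ε) * deriv u (t0 + ε)) := by
    ring
  linarith [hX, hY, hXY.ge, hXY.le]
end
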